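/- arXiv:2302.05426 — 5 statements merged into one kernel-verified Lean document; each statement's English description precedes it below -/
import Mathlib

section
/- Let E be a finite set and let the additive group V = (F_2)^E act on a set X. For x ∈ X, call a subset S ⊆ E a support of x if every v ∈ V whose set of nonzero coordinates is disjoint from S satisfies v • x = x. If S₁ and S₂ are both supports of x, then S₁ ∩ S₂ is also a support of x. Consequently, x has a unique inclusion-minimal support. -/
/-- `S` is a support of `x` for the action of `(F₂)^E` on `X`:
every vector whose set of nonzero coordinates is disjoint from `S` fixes `x`. -/
def IsCFISupport {E X : Type*} [AddAction (E → ZMod 2) X]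
    (x : X) (S : Set E) : Prop :=
  ∀ v : E → ZMod 2, (∀ e ∈ S, v e = 0) → v +ᵥ x = x

lemma isCFISupport_inter {E X : Type*} [AddAction (E → ZMod 2) X] (x : X)
    (S₁ S₂ : Set E) (h₁ : IsCFISupport x S₁) (h₂ : IsCFISupport x S₂) :
    IsCFISupport x (S₁ ∩ S₂) := by
  classical
  intro v hv
  set v₁ : E → ZMod 2 := fun e => if e ∈ S₁ then 0 else v e with hv₁
  set v₂ : E → ZMod 2 := fun e => if e ∈ S₁ then v e else 0 with hv₂
  have hsum : v = v₁ + v₂ := by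
    funext e
    by_cases h : e ∈ S₁ <;> simp [hv₁, hv₂, h]
  have h2 : v₂ +ᵥ x = x := by
    apply h₂
    intro e he
    by_cases h : e ∈ S₁
    · simpa [hv₂, h] using hv e ⟨h, he⟩
    · simp [hv₂, h]
  have h1 : v₁ +ᵥ x = x := by
    apply h₁
    intro e he
    simp [hv₁, he]
  calc v +ᵥ x = v₁ +ᵥ (v₂ +ᵥ x) := by rw [hsum, add_vadd]
    _ = x := by rw [h2, h1]

lemma isCFISupport_univ {E X : Type*} [AddAction (E → ZMod 2) X] (x : X) :
    IsCFISupport x (Set.univ : Set E) := by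
  intro v hv
  have : v = 0 := funext fun e => hv e (Set.mem_univ e)
  rw [this, zero_vadd]

lemma isCFISupport_sInter {E X : Type*} [AddAction (E → ZMod 2) X] (x : X)
    (F : Set (Set E)) (hfin : F.Finite) (hF : ∀ S ∈ F, IsCFISupport x S) :
    IsCFISupport x (⋂₀ F) := by
  classical
  have key : ∀ G : Finset (Set E), (∀ S ∈ G, IsCFISupport x S) →
      IsCFISupport x (⋂₀ (G : Set (Set E))) := by
    intro G
    induction G using Finset.induction_on with
    | empty => intro _; simpa using isCFISupport_univ x
    | @insert a s _ ih =>
      intro hG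
      rw [Finset.coe_insert, Set.sInter_insert]
      exact isCFISupport_inter x _ _ (hG a (Finset.mem_insert_self a s))
        (ih fun S hS => hG S (Finset.mem_insert_of_mem hS))
  have := key hfin.toFinset (fun S hS => hF S (hfin.mem_toFinset.mp hS))
  rwa [hfin.coe_toFinset] at this

/-- The intersection of two supports is a support; consequently there is a unique
inclusion-minimal support. -/
theorem isCFISupport_inter_and_unique_minimal {E X : Type*} [Fintype E]
    [AddAction (E → ZMod 2) X] (x : X) :
    (∀ S₁ S₂ : Set E, IsCFISupport x S₁ → IsCFISupport x S₂ →
        IsCFISupport x (S₁ ∩ S₂)) ∧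
    (∃! S : Set E, IsCFISupport x S ∧ ∀ T : Set E, IsCFISupport x T → S ⊆ T) := by
  refine ⟨isCFISupport_inter x, ?_⟩
  refine ⟨⋂₀ {S | IsCFISupport x S}, ⟨?_, ?_⟩, ?_⟩
  · exact isCFISupport_sInter x _ (Set.toFinite _) fun S hS => hS
  · intro T hT
    exact Set.sInter_subset_of_mem hT
  · rintro S ⟨hS, hmin⟩
    apply subset_antisymm
    · exact Set.subset_sInter fun T hT => hmin T hT
    · exact Set.sInter_subset_of_mem hS
end

section
/- Let n ≥ 4 and let 𝒫 be a partition of {1,…,n} that contains some part P with 2 ≤ |P| ≤ n−2. Then the orbit of 𝒫 under the natural action of Sym_n on partitions of {1,…,n} has size at least n(n−1)/4. -/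
/-!
Let `k = |P|` and let `m` be the number of parts of size `k`; every partition in the orbit has
exactly `m` parts of size `k`, and `k * m ≤ n`. Every `k`-subset of `{1,…,n}` is a part of some
partition in the orbit, and each partition accounts for only `m` of them, so
`C(n, k) ≤ m * |orbit|`; this settles `m = 1`, as `C(n, k) ≥ C(n, 2)`. For `m ≥ 2`, double count
ordered pairs of disjoint `k`-subsets instead: each is realised by a partition in the orbit, and
each partition realises `m (m - 1)` of them, so `C(n, k) C(n - k, k) ≤ m (m - 1) |orbit|`.
Since `C(n - k, k) ≥ C(m, 2)` when `k * m ≤ n`, this gives `C(n, 2) ≤ 2 |orbit|`.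
-/

namespace Nat

lemma two_mul_choose_two (n : ℕ) : 2 * n.choose 2 = n * (n - 1) := by
  rw [choose_two_right, Nat.mul_div_cancel' n.even_mul_pred_self.two_dvd]

lemma choose_le_choose_of_le_of_le_half {n a b : ℕ} (hab : a ≤ b) (hb : b ≤ n / 2) :
    n.choose a ≤ n.choose b := by
  induction b, hab using Nat.le_induction with
  | base => rfl
  | succ b _ ih => exact (ih (by omega)).trans (choose_le_succ_of_lt_half_left (by omega))

lemma choose_le_choose_of_le_of_add_le {n a b : ℕ} (hab : a ≤ b) (habn : a + b ≤ n) :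
    n.choose a ≤ n.choose b := by
  rcases le_or_gt b (n / 2) with hb | hb
  · exact choose_le_choose_of_le_of_le_half hab hb
  · rw [← choose_symm (by omega : b ≤ n)]
    exact choose_le_choose_of_le_of_le_half (by omega) (by omega)

lemma choose_two_le_choose_sub_of_mul_le {n k m : ℕ} (hk : 2 ≤ k) (hkm : k * m ≤ n) :
    m.choose 2 ≤ (n - k).choose k := by
  rcases lt_or_ge m 2 with hm | hm
  · simp [choose_eq_zero_of_lt hm]
  rcases le_or_gt (k + 2) (n - k) with hkn | hkn
  · have : k + m ≤ k * m := by nlinarith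
    calc m.choose 2 ≤ (n - k).choose 2 := choose_le_choose 2 (by omega)
      _ ≤ (n - k).choose k := choose_le_choose_of_le_of_add_le hk (by omega)
  · obtain rfl : m = 2 := by
      by_contra hm2
      have : k * 3 ≤ k * m := Nat.mul_le_mul_left k (by omega)
      omega
    exact choose_pos (by omega)

end Nat

open Equiv Set Function

variable {α : Type*}

lemma Set.ncard_offDiag {s : Set α} (hs : s.Finite) :
    s.offDiag.ncard = s.ncard * s.ncard - s.ncard := by
  classical
  lift s to Finset α using hs
  rw [← Finset.coe_offDiag, ncard_coe_finset, ncard_coe_finset, Finset.offDiag_card]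

lemma Set.ncard_le_mul_ncard_of_forall_exists {X Y : Type*} {O : Set X} (hO : O.Finite)
    {T : Set Y} (R : X → Y → Prop) {r : ℕ} (hcover : ∀ y ∈ T, ∃ x ∈ O, R x y)
    (hfiber : ∀ x ∈ O, {y ∈ T | R x y}.ncard ≤ r) : T.ncard ≤ r * O.ncard := by
  have hT : T = ⋃ x ∈ hO.toFinset, {y ∈ T | R x y} := by
    ext y
    simp only [Finite.mem_toFinset, mem_iUnion, mem_sep_iff, exists_prop]
    exact ⟨fun hy => (hcover y hy).imp fun x hx => ⟨hx.1, hy, hx.2⟩, fun ⟨_, _, hy, _⟩ => hy⟩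
  calc T.ncard = (⋃ x ∈ hO.toFinset, {y ∈ T | R x y}).ncard := congrArg ncard hT
    _ ≤ ∑ x ∈ hO.toFinset, {y ∈ T | R x y}.ncard := Finset.set_ncard_biUnion_le _ _
    _ ≤ hO.toFinset.card • r :=
      Finset.sum_le_card_nsmul _ _ _ fun x hx => hfiber x (hO.mem_toFinset.1 hx)
    _ = r * O.ncard := by rw [smul_eq_mul, mul_comm, ncard_eq_toFinset_card O hO]

lemma Equiv.Perm.image_eq_of_mapsTo_of_ncard_eq [Finite α] (σ : Perm α) {s t : Set α}
    (hst : MapsTo σ s t) (h : s.ncard = t.ncard) : σ '' s = t :=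
  eq_of_subset_of_ncard_le hst.image_subset (by rw [ncard_image_of_injective _ σ.injective, h])

lemma exists_perm_image_eq_and_image_eq [Finite α] {s₁ s₂ t₁ t₂ : Set α}
    (hs : Disjoint s₁ s₂) (ht : Disjoint t₁ t₂) (h₁ : s₁.ncard = t₁.ncard)
    (h₂ : s₂.ncard = t₂.ncard) : ∃ σ : Perm α, σ '' s₁ = t₁ ∧ σ '' s₂ = t₂ := by
  obtain ⟨e₁⟩ : Nonempty (s₁ ≃ t₁) :=
    Finite.card_eq.1 (by rwa [Nat.card_coe_set_eq, Nat.card_coe_set_eq])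
  obtain ⟨e₂⟩ : Nonempty (s₂ ≃ t₂) :=
    Finite.card_eq.1 (by rwa [Nat.card_coe_set_eq, Nat.card_coe_set_eq])
  obtain ⟨σ, hσ⟩ := Perm.exists_extending_pair
    (Sum.elim (fun x : s₁ => (x : α)) (fun x : s₂ => (x : α)))
    (Sum.elim (fun x => (e₁ x : α)) (fun x => (e₂ x : α)))
    (Subtype.val_injective.sumElim Subtype.val_injective fun a b => hs.ne_of_mem a.2 b.2)
    ((Subtype.val_injective.comp e₁.injective).sumElim (Subtype.val_injective.comp e₂.injective)
      fun a b => ht.ne_of_mem (e₁ a).2 (e₂ b).2)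
  exact ⟨σ, σ.image_eq_of_mapsTo_of_ncard_eq (fun x hx => hσ (.inl ⟨x, hx⟩) ▸ (e₁ _).2) h₁,
    σ.image_eq_of_mapsTo_of_ncard_eq (fun x hx => hσ (.inr ⟨x, hx⟩) ▸ (e₂ _).2) h₂⟩

lemma exists_perm_image_eq [Finite α] {s t : Set α} (h : s.ncard = t.ncard) :
    ∃ σ : Perm α, σ '' s = t :=
  (exists_perm_image_eq_and_image_eq (disjoint_empty s) (disjoint_empty t) h rfl).imp
    fun _ => And.left

lemma Set.ncard_setOf_ncard_eq [Finite α] (k : ℕ) :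
    {A : Set α | A.ncard = k}.ncard = (Nat.card α).choose k := by
  simpa using ncard_powerset_ncard (toFinite (univ : Set α)) k

lemma Set.ncard_setOf_disjoint_pairs [Finite α] (k : ℕ) :
    {p : Set α × Set α | p.1.ncard = k ∧ p.2.ncard = k ∧ Disjoint p.1 p.2}.ncard =
      (Nat.card α).choose k * (Nat.card α - k).choose k := by
  have hunion : {p : Set α × Set α | p.1.ncard = k ∧ p.2.ncard = k ∧ Disjoint p.1 p.2} =
      ⋃ A ∈ {A : Set α | A.ncard = k}, Prod.mk A '' {B ⊆ Aᶜ | B.ncard = k} := by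
    ext ⟨A, B⟩
    simp [subset_compl_iff_disjoint_left, disjoint_comm, and_comm, and_left_comm]
  have hfiber (A : Set α) (hA : A ∈ {A : Set α | A.ncard = k}) :
      (Prod.mk A '' {B ⊆ Aᶜ | B.ncard = k}).ncard = (Nat.card α - k).choose k := by
    rw [ncard_image_of_injective _ (Prod.mk_right_injective A), ncard_powerset_ncard (toFinite _),
      ncard_compl, hA]
  have hdisj : {A : Set α | A.ncard = k}.PairwiseDisjoint
      fun A => Prod.mk A '' {B ⊆ Aᶜ | B.ncard = k} := by
    intro A _ A' _ hAA'
    simp only [onFun, disjoint_left, mem_image]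
    rintro _ ⟨B, -, rfl⟩ ⟨B', -, hB'⟩
    exact hAA' (congrArg Prod.fst hB').symm
  rw [hunion, (toFinite _).ncard_biUnion (fun _ _ => toFinite _) hdisj,
    finsum_mem_congr rfl hfiber,
    ← mul_one ((Nat.card α - k).choose k), ← mul_finsum_mem' _ _ (toFinite _), finsum_one,
    ncard_setOf_ncard_eq, mul_one, mul_comm]

def partsOfCard (𝔓 : Set (Set α)) (k : ℕ) : Set (Set α) := {A ∈ 𝔓 | A.ncard = k}

def permOrbit (𝔓 : Set (Set α)) : Set (Set (Set α)) :=
  {Q | ∃ π : Perm α, Q = (fun A => π '' A) '' 𝔓}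

lemma partsOfCard_image_perm (π : Perm α) (𝔓 : Set (Set α)) (k : ℕ) :
    partsOfCard ((fun A => π '' A) '' 𝔓) k = (fun A => π '' A) '' partsOfCard 𝔓 k := by
  ext A
  simp only [partsOfCard, mem_sep_iff, mem_image]
  constructor
  · rintro ⟨⟨B, hB, rfl⟩, hcard⟩
    exact ⟨B, ⟨hB, by rwa [ncard_image_of_injective _ π.injective] at hcard⟩, rfl⟩
  · rintro ⟨B, ⟨hB, hcard⟩, rfl⟩
    exact ⟨⟨B, hB, rfl⟩, by rwa [ncard_image_of_injective _ π.injective]⟩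

lemma ncard_partsOfCard_of_mem_permOrbit {𝔓 Q : Set (Set α)} (hQ : Q ∈ permOrbit 𝔓) (k : ℕ) :
    (partsOfCard Q k).ncard = (partsOfCard 𝔓 k).ncard := by
  obtain ⟨π, rfl⟩ := hQ
  rw [partsOfCard_image_perm, ncard_image_of_injective _ (image_injective.2 π.injective)]

lemma mul_ncard_partsOfCard_le [Finite α] {𝔓 : Set (Set α)} (h𝔓 : 𝔓.PairwiseDisjoint id)
    (k : ℕ) : k * (partsOfCard 𝔓 k).ncard ≤ Nat.card α := by
  calc k * (partsOfCard 𝔓 k).ncard = ∑ᶠ A ∈ partsOfCard 𝔓 k, A.ncard := by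
        rw [← finsum_one, mul_finsum_mem' _ _ (toFinite _), mul_one]
        exact finsum_mem_congr rfl fun A hA => hA.2.symm
    _ = (⋃ A ∈ partsOfCard 𝔓 k, A).ncard :=
        ((toFinite _).ncard_biUnion (fun _ _ => toFinite _) (h𝔓.subset (sep_subset _ _))).symm
    _ ≤ Nat.card α := ncard_le_card _

lemma choose_le_mul_ncard_permOrbit [Finite α] {𝔓 : Set (Set α)} {k : ℕ} {P : Set α}
    (hP : P ∈ partsOfCard 𝔓 k) :
    (Nat.card α).choose k ≤ (partsOfCard 𝔓 k).ncard * (permOrbit 𝔓).ncard := by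
  rw [← ncard_setOf_ncard_eq]
  refine ncard_le_mul_ncard_of_forall_exists (toFinite _) (fun Q A => A ∈ partsOfCard Q k)
    (fun A hA => ?_) (fun Q hQ => ?_)
  · obtain ⟨σ, hσ⟩ := exists_perm_image_eq (hP.2.trans hA.symm)
    refine ⟨_, ⟨σ, rfl⟩, ?_⟩
    rw [partsOfCard_image_perm]
    exact ⟨P, hP, hσ⟩
  · rw [← ncard_partsOfCard_of_mem_permOrbit hQ]
    exact ncard_le_ncard (fun _ hA => hA.2) (toFinite _)

lemma choose_mul_choose_le_mul_ncard_permOrbit [Finite α] {𝔓 : Set (Set α)}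
    (h𝔓 : 𝔓.PairwiseDisjoint id) {k : ℕ} {P₁ P₂ : Set α} (hP₁ : P₁ ∈ partsOfCard 𝔓 k)
    (hP₂ : P₂ ∈ partsOfCard 𝔓 k) (hne : P₁ ≠ P₂) :
    (Nat.card α).choose k * (Nat.card α - k).choose k ≤
      ((partsOfCard 𝔓 k).ncard * (partsOfCard 𝔓 k).ncard - (partsOfCard 𝔓 k).ncard) *
        (permOrbit 𝔓).ncard := by
  rw [← ncard_setOf_disjoint_pairs, ← ncard_offDiag (toFinite _)]
  refine ncard_le_mul_ncard_of_forall_exists (toFinite _)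
    (fun Q p => p ∈ (partsOfCard Q k).offDiag) (fun p hp => ?_) (fun Q hQ => ?_)
  · obtain ⟨hA, hB, hAB⟩ := hp
    obtain ⟨σ, hσ₁, hσ₂⟩ :=
      exists_perm_image_eq_and_image_eq (h𝔓 hP₁.1 hP₂.1 hne : Disjoint P₁ P₂) hAB
      (hP₁.2.trans hA.symm) (hP₂.2.trans hB.symm)
    refine ⟨_, ⟨σ, rfl⟩, ?_⟩
    rw [partsOfCard_image_perm]
    exact ⟨⟨P₁, hP₁, hσ₁⟩, ⟨P₂, hP₂, hσ₂⟩,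
      fun h => hne (image_injective.2 σ.injective (hσ₁.trans (h.trans hσ₂.symm)))⟩
  · rw [ncard_offDiag (toFinite _), ← ncard_partsOfCard_of_mem_permOrbit hQ,
      ← ncard_offDiag (toFinite _)]
    exact ncard_le_ncard (fun _ hp => hp.2) (toFinite _)

theorem orbit_partition_large_general (n : ℕ) (𝔓 : Set (Set (Fin n)))
    (h𝔓 : Setoid.IsPartition 𝔓) (P : Set (Fin n)) (hP : P ∈ 𝔓)
    (h2 : 2 ≤ P.ncard) (hn2 : P.ncard ≤ n - 2) :
    n * (n - 1) ≤ 4 * {Q : Set (Set (Fin n)) |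
        ∃ π : Equiv.Perm (Fin n), Q = (fun A => π '' A) '' 𝔓}.ncard := by
  change n * (n - 1) ≤ 4 * (permOrbit 𝔓).ncard
  set k := P.ncard
  set m := (partsOfCard 𝔓 k).ncard
  have hPk : P ∈ partsOfCard 𝔓 k := ⟨hP, rfl⟩
  have hchoose : n.choose 2 ≤ n.choose k := Nat.choose_le_choose_of_le_of_add_le h2 (by omega)
  suffices n.choose 2 ≤ 2 * (permOrbit 𝔓).ncard by rw [← Nat.two_mul_choose_two]; omega
  have hm₀ : m ≠ 0 := ((ncard_pos (toFinite _)).2 ⟨P, hPk⟩).ne'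
  obtain hm | hm : m = 1 ∨ 1 < m := by omega
  · have : n.choose k ≤ m * (permOrbit 𝔓).ncard := by
      simpa only [Nat.card_fin] using choose_le_mul_ncard_permOrbit hPk
    rw [hm] at this
    omega
  · obtain ⟨P₁, hP₁, P₂, hP₂, hne⟩ := (one_lt_ncard (toFinite _)).1 hm
    have hpairs : n.choose k * (n - k).choose k ≤ (m * m - m) * (permOrbit 𝔓).ncard := by
      simpa only [Nat.card_fin] using
        choose_mul_choose_le_mul_ncard_permOrbit h𝔓.pairwiseDisjoint hP₁ hP₂ hne
    have hm2 : m.choose 2 ≤ (n - k).choose k := Nat.choose_two_le_choose_sub_of_mul_le h2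
      (by simpa using mul_ncard_partsOfCard_le h𝔓.pairwiseDisjoint k)
    rw [← Nat.mul_sub_one, ← Nat.two_mul_choose_two] at hpairs
    refine Nat.le_of_mul_le_mul_right ?_ (Nat.choose_pos hm : 0 < m.choose 2)
    calc n.choose 2 * m.choose 2 ≤ n.choose k * (n - k).choose k := Nat.mul_le_mul hchoose hm2
      _ ≤ 2 * m.choose 2 * (permOrbit 𝔓).ncard := hpairs
      _ = 2 * (permOrbit 𝔓).ncard * m.choose 2 := by ring

/-- If a partition `𝔓` of `{1,…,n}` (with `n ≥ 4`) has a part `P` with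
`2 ≤ |P| ≤ n − 2`, then the orbit of `𝔓` under the action of `Sym_n` on partitions
has size at least `n(n−1)/4`. -/
theorem orbit_partition_large (n : ℕ) (hn : 4 ≤ n) (𝔓 : Set (Set (Fin n)))
    (h𝔓 : Setoid.IsPartition 𝔓) (P : Set (Fin n)) (hP : P ∈ 𝔓)
    (h2 : 2 ≤ P.ncard) (hn2 : P.ncard ≤ n - 2) :
    n * (n - 1) ≤ 4 * {Q : Set (Set (Fin n)) |
        ∃ π : Equiv.Perm (Fin n), Q = (fun A => π '' A) '' 𝔓}.ncard :=
  orbit_partition_large_general n 𝔓 h𝔓 P hP h2 hn2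
end

section
/- Let A be a finite set and G ≤ Sym(A) a permutation group. Suppose P, P' ⊆ A satisfy |P| ≥ 5, |P'| ≥ 5, and P ∩ P' ≠ ∅, and suppose Alt(P) ≤ G and Alt(P') ≤ G, where Alt(Q) denotes the group of even permutations of A supported inside Q (fixing all points outside Q). Then Alt(P ∪ P') ≤ G. -/
/-!
`Alt(P ∪ P')` is generated by 3-cycles, and a 3-cycle on `P ∪ P'` is a product of at most two
3-cycles through a fixed point `z ∈ P ∩ P'`. A 3-cycle `(z a b)` with `a, b` both in `P` or both
in `P'` is in `G` directly. If `a ∈ P` and `b ∈ P'`, it is the commutator of the 3-cycles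
`(z a c)` in `Alt(P)` and `(z b d)` in `Alt(P')`, whose supports meet only in `z`; the bounds
`|P|, |P'| ≥ 5` leave room for the auxiliary points `c` and `d`.
-/

open scoped commutatorElement

namespace Equiv.Perm

variable {A : Type*} [DecidableEq A]

theorem commutatorElement_swap_mul_swap {z a b c d : A} (hza : z ≠ a) (hzb : z ≠ b)
    (hzc : z ≠ c) (hzd : z ≠ d) (hab : a ≠ b) (had : a ≠ d) (hbc : b ≠ c) (hcd : c ≠ d) :
    ⁅swap z a * swap a c, swap z b * swap b d⁆ = swap z a * swap a b := by
  ext t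
  simp only [commutatorElement_def, mul_inv_rev, swap_inv, mul_apply, swap_apply_def]
  grind

theorem swap_mul_swap_eq_mul_of_ne {w x y z : A} (hwx : w ≠ x) (hwy : w ≠ y) (hxy : x ≠ y) :
    swap x y * swap y z = (swap w x * swap x y) * (swap w y * swap y z) := by
  ext t
  simp only [mul_apply, swap_apply_def]
  grind

variable [Fintype A]

def alternatingGroupOn (Q : Set A) : Subgroup (Perm A) :=
  alternatingGroup A ⊓ fixingSubgroup (Perm A) Qᶜ

theorem mem_alternatingGroupOn {Q : Set A} {σ : Perm A} :
    σ ∈ alternatingGroupOn Q ↔ sign σ = 1 ∧ ∀ a ∉ Q, σ a = a := by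
  simp only [alternatingGroupOn, Subgroup.mem_inf, mem_alternatingGroup, mem_fixingSubgroup_iff,
    Set.mem_compl_iff, Perm.smul_def]

theorem swap_mul_swap_mem_alternatingGroupOn {Q : Set A} {x y u v : A}
    (hx : x ∈ Q) (hy : y ∈ Q) (hu : u ∈ Q) (hv : v ∈ Q) (hxy : x ≠ y) (huv : u ≠ v) :
    swap x y * swap u v ∈ alternatingGroupOn Q := by
  refine mem_alternatingGroupOn.2 ⟨by simp [sign_swap hxy, sign_swap huv], fun a ha => ?_⟩
  rw [mul_apply, swap_apply_of_ne_of_ne (ne_of_mem_of_not_mem hu ha).symm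
      (ne_of_mem_of_not_mem hv ha).symm,
    swap_apply_of_ne_of_ne (ne_of_mem_of_not_mem hx ha).symm (ne_of_mem_of_not_mem hy ha).symm]

theorem alternatingGroupOn_le_of_isThreeCycle {G : Subgroup (Perm A)} {S : Set A}
    (h : ∀ c : Perm A, c.IsThreeCycle → ↑c.support ⊆ S → c ∈ G) :
    alternatingGroupOn S ≤ G := by
  classical
  intro σ hσ
  obtain ⟨hsign, hfix⟩ := mem_alternatingGroupOn.1 hσ
  obtain ⟨τ, rfl⟩ : σ ∈ (ofSubtype : Perm S →* Perm A).range :=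
    mem_range_ofSubtype_iff.2 fun a ha => by_contra fun haS => mem_support.1 ha (hfix a haS)
  have hτ : τ ∈ Subgroup.closure {c : Perm S | c.IsThreeCycle} := by
    rw [closure_three_cycles_eq_alternating, mem_alternatingGroup, ← sign_ofSubtype, hsign]
  have hmap := Subgroup.mem_map_of_mem (ofSubtype : Perm S →* Perm A) hτ
  rw [MonoidHom.map_closure] at hmap
  refine (Subgroup.closure_le G).2 ?_ hmap
  rintro _ ⟨c, hc, rfl⟩
  refine h _ (by rw [IsThreeCycle, cycleType_ofSubtype]; exact hc) fun a ha => ?_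
  exact ((mem_support_ofSubtype a c).1 ha).1

theorem IsThreeCycle.mem_of_forall_swap_mul_swap_mem {G : Subgroup (Perm A)} {S : Set A} {z : A}
    {c : Perm A} (hc : c.IsThreeCycle) (hcS : ↑c.support ⊆ S)
    (h : ∀ a b, a ∈ S → b ∈ S → z ≠ a → z ≠ b → a ≠ b → swap z a * swap a b ∈ G) :
    c ∈ G := by
  obtain ⟨x, hx, hxz⟩ : ∃ x ∈ c.support, z ∈ c.support → x = z := by
    by_cases hz : z ∈ c.support
    · exact ⟨z, hz, fun _ => rfl⟩
    · obtain ⟨x, hx⟩ := Finset.card_pos.1 (by rw [hc.card_support]; omega)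
      exact ⟨x, hx, fun hz' => (hz hz').elim⟩
  have hx1 := apply_mem_support.2 hx
  have hx2 := apply_mem_support.2 hx1
  have hnodup := hc.nodup_iff_mem_support.2 hx
  simp only [List.nodup_cons, List.mem_cons, List.not_mem_nil, not_or, or_false,
    List.nodup_nil] at hnodup
  obtain ⟨⟨h01, h02⟩, h12, -⟩ := hnodup
  rw [hc.eq_swap_mul_swap_iff_mem_support.2 hx]
  by_cases hzx : z = x
  · subst hzx
    exact h _ _ (hcS hx1) (hcS hx2) h01 h02 h12
  · have hz : z ∉ c.support := fun hz => hzx (hxz hz).symm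
    have hz1 : z ≠ c x := fun he => hz (he ▸ hx1)
    have hz2 : z ≠ c (c x) := fun he => hz (he ▸ hx2)
    rw [swap_mul_swap_eq_mul_of_ne hzx hz1 h01]
    exact G.mul_mem (h _ _ (hcS hx) (hcS hx1) hzx hz1 h01) (h _ _ (hcS hx1) (hcS hx2) hz1 hz2 h12)

section

variable {G : Subgroup (Perm A)} {P P' : Set A}

theorem swap_mul_swap_mem_of_mem_of_mem (hPG : alternatingGroupOn P ≤ G)
    (hP'G : alternatingGroupOn P' ≤ G) (hP : 4 ≤ P.ncard) (hP' : 5 ≤ P'.ncard) {z a b : A}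
    (hz : z ∈ P ∩ P') (ha : a ∈ P) (hb : b ∈ P') (hza : z ≠ a) (hzb : z ≠ b) (hab : a ≠ b) :
    swap z a * swap a b ∈ G := by
  obtain ⟨c, hcP, hc⟩ := Set.exists_mem_notMem_of_ncard_lt_ncard
    (s := (({z, a, b} : Finset A) : Set A)) (t := P)
    (by rw [Set.ncard_coe_finset]; exact lt_of_le_of_lt Finset.card_le_three hP)
  obtain ⟨d, hdP', hd⟩ := Set.exists_mem_notMem_of_ncard_lt_ncard
    (s := (({z, a, b, c} : Finset A) : Set A)) (t := P')
    (by rw [Set.ncard_coe_finset]; exact lt_of_le_of_lt Finset.card_le_four hP')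
  simp only [Finset.coe_insert, Finset.coe_singleton, Set.mem_insert_iff,
    Set.mem_singleton_iff, not_or] at hc hd
  obtain ⟨hcz, hca, hcb⟩ := hc
  obtain ⟨hdz, hda, hdb, hdc⟩ := hd
  have hσ : swap z a * swap a c ∈ G :=
    hPG (swap_mul_swap_mem_alternatingGroupOn hz.1 ha ha hcP hza (Ne.symm hca))
  have hτ : swap z b * swap b d ∈ G :=
    hP'G (swap_mul_swap_mem_alternatingGroupOn hz.2 hb hb hdP' hzb (Ne.symm hdb))
  rw [← commutatorElement_swap_mul_swap hza hzb (Ne.symm hcz) (Ne.symm hdz) hab (Ne.symm hda)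
    (Ne.symm hcb) (Ne.symm hdc), commutatorElement_def]
  exact G.mul_mem (G.mul_mem (G.mul_mem hσ hτ) (G.inv_mem hσ)) (G.inv_mem hτ)

theorem swap_mul_swap_mem_of_mem_union (hPG : alternatingGroupOn P ≤ G)
    (hP'G : alternatingGroupOn P' ≤ G) (hP : 5 ≤ P.ncard) (hP' : 5 ≤ P'.ncard) {z a b : A}
    (hz : z ∈ P ∩ P') (ha : a ∈ P ∪ P') (hb : b ∈ P ∪ P') (hza : z ≠ a) (hzb : z ≠ b)
    (hab : a ≠ b) :
    swap z a * swap a b ∈ G := by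
  rcases ha with ha | ha <;> rcases hb with hb | hb
  · exact hPG (swap_mul_swap_mem_alternatingGroupOn hz.1 ha ha hb hza hab)
  · exact swap_mul_swap_mem_of_mem_of_mem hPG hP'G (by omega) hP' hz ha hb hza hzb hab
  · exact swap_mul_swap_mem_of_mem_of_mem hP'G hPG (by omega) hP ⟨hz.2, hz.1⟩ ha hb hza hzb hab
  · exact hP'G (swap_mul_swap_mem_alternatingGroupOn hz.2 ha ha hb hza hab)

end

end Equiv.Perm

open Equiv.Perm

/-- If `G ≤ Sym(A)` contains the alternating groups on overlapping subsets `P` and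
`P'` of size at least 5 (as even permutations supported inside the respective set),
then `G` contains the alternating group on `P ∪ P'`. -/
theorem alt_union_le_of_alt_le {A : Type*} [Fintype A] [DecidableEq A]
    (G : Subgroup (Equiv.Perm A)) (P P' : Set A)
    (hP : 5 ≤ P.ncard) (hP' : 5 ≤ P'.ncard) (hint : (P ∩ P').Nonempty)
    (hAltP : ∀ σ : Equiv.Perm A, Equiv.Perm.sign σ = 1 → (∀ a ∉ P, σ a = a) → σ ∈ G)
    (hAltP' : ∀ σ : Equiv.Perm A, Equiv.Perm.sign σ = 1 → (∀ a ∉ P', σ a = a) → σ ∈ G) :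
    ∀ σ : Equiv.Perm A, Equiv.Perm.sign σ = 1 → (∀ a ∉ P ∪ P', σ a = a) → σ ∈ G := by
  have hPG : alternatingGroupOn P ≤ G := fun σ hσ => (mem_alternatingGroupOn.1 hσ).elim (hAltP σ)
  have hP'G : alternatingGroupOn P' ≤ G := fun σ hσ =>
    (mem_alternatingGroupOn.1 hσ).elim (hAltP' σ)
  obtain ⟨z, hz⟩ := hint
  have hG : alternatingGroupOn (P ∪ P') ≤ G := alternatingGroupOn_le_of_isThreeCycle
    fun _ hc hcS => hc.mem_of_forall_swap_mul_swap_mem hcS fun _ _ ha hb hza hzb hab =>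
      swap_mul_swap_mem_of_mem_union hPG hP'G hP hP' hz ha hb hza hzb hab
  exact fun σ hsign hfix => hG (mem_alternatingGroupOn.2 ⟨hsign, hfix⟩)
end

section
/- Let H ≤ Sym_n be a permutation group and A ⊆ {1,…,n} an orbit of H with |A| ≥ 5. Let H^A ≤ Sym(A) denote the restriction of H to A, and suppose Alt(A) ≤ H^A. Then at least one of the following holds: (1) the restriction to A of the pointwise stabilizer in H of the complement {1,…,n}∖A contains Alt(A); or (2) any two elements of H that agree on {1,…,n}∖A also agree on A (i.e., the action on the complement determines the action on A). -/
/-!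
Let `K ≤ Sym(A)` consist of the permutations of `A` whose extension by the identity lies in `H`;
this is the paper's `N`. If `s ∈ H` realises an even permutation `h` of `A`, then `s⁻¹ h` fixes
`A` pointwise and so commutes with every element of `K`; hence conjugation by `s` acts on `K`
as conjugation by `h`, and `Alt(A)` normalises `K`. As `Alt(A)` is simple with trivial
centraliser in `Sym(A)`, either `K` contains `Alt(A)`, or `K = 1`, which says that two elements
of `H` agreeing off `A` agree everywhere.
-/

namespace Equiv.Perm

section alternatingGroup

variable {α : Type*} [Fintype α] [DecidableEq α]

theorem centralizer_alternatingGroup_eq_bot (h5 : 5 ≤ Nat.card α) :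
    Subgroup.centralizer (alternatingGroup α : Set (Perm α)) = ⊥ := by
  by_contra hC
  rw [← Ne, ← Subgroup.nontrivial_iff_ne_bot] at hC
  have hle := alternatingGroup_le_of_normal h5 hC
  have : IsMulCommutative (alternatingGroup α) :=
    ⟨⟨fun g h => Subtype.ext (hle g.2 h h.2).symm⟩⟩
  have := alternatingGroup.isMulCommutative_iff_card_le_three.1 this
  omega

theorem eq_bot_or_alternatingGroup_le_of_le_normalizer (h5 : 5 ≤ Nat.card α)
    {K : Subgroup (Perm α)} (hK : alternatingGroup α ≤ Subgroup.normalizer K) :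
    K = ⊥ ∨ alternatingGroup α ≤ K := by
  have := alternatingGroup.isSimpleGroup h5
  have := Subgroup.normal_subgroupOf_of_le_normalizer hK
  rcases IsSimpleGroup.eq_bot_or_eq_top_of_normal (K.subgroupOf (alternatingGroup α)) this
    with hbot | htop
  · left
    rw [Subgroup.subgroupOf_eq_bot] at hbot
    -- commutators of `K` with `alternatingGroup α` lie in `K ⊓ alternatingGroup α = ⊥`
    rw [eq_bot_iff, ← centralizer_alternatingGroup_eq_bot h5]
    intro k hk h hh
    have hcomm : h * k * h⁻¹ * k⁻¹ ∈ K ⊓ alternatingGroup α := by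
      refine Subgroup.mem_inf.2
        ⟨mul_mem (Subgroup.le_normalizer_iff.1 hK h hh k hk) (inv_mem hk), ?_⟩
      simp [mem_alternatingGroup, mem_alternatingGroup.1 hh]
    rwa [hbot.eq_bot, Subgroup.mem_bot, mul_inv_eq_one, mul_inv_eq_iff_eq_mul] at hcomm
  · exact Or.inr (Subgroup.subgroupOf_eq_top.1 htop)

end alternatingGroup

section ofSubtype

variable {α : Type*} {p : α → Prop} [DecidablePred p]

theorem conj_ofSubtype_of_eqOn (g h : Perm (Subtype p)) {s : Perm α}
    (hs : ∀ a, p a → s a = ofSubtype h a) :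
    s * ofSubtype g * s⁻¹ = ofSubtype (h * g * h⁻¹) := by
  set t := (ofSubtype h)⁻¹ * s
  have ht : Disjoint t (ofSubtype g) := fun a => by
    by_cases ha : p a
    · left
      simp [t, hs a ha]
    · exact Or.inr (ofSubtype_apply_of_not_mem g ha)
  rw [show s = ofSubtype h * t by simp [t], map_mul, map_mul, map_inv, mul_assoc (ofSubtype h),
    ht.commute.eq]
  group

theorem exists_ofSubtype_eq [Fintype α] [DecidableEq α] {τ : Perm α}
    (hτ : ∀ a, ¬p a → τ a = a) :
    ∃ τ' : Perm (Subtype p), ofSubtype τ' = τ :=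
  mem_range_ofSubtype_iff.2 fun a ha => by_contra fun hpa => mem_support.1 ha (hτ a hpa)

end ofSubtype

end Equiv.Perm

open Equiv Equiv.Perm

theorem alt_orbit_dichotomy_general {n : ℕ} (H : Subgroup (Equiv.Perm (Fin n)))
    (A : Set (Fin n))
    (hcard : 5 ≤ A.ncard)
    (halt : ∀ τ : Equiv.Perm (Fin n), (∀ a ∉ A, τ a = a) → Equiv.Perm.sign τ = 1 →
      ∃ σ ∈ H, ∀ a ∈ A, σ a = τ a) :
    (∀ τ : Equiv.Perm (Fin n), (∀ a ∉ A, τ a = a) → Equiv.Perm.sign τ = 1 → τ ∈ H) ∨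
    (∀ σ ∈ H, ∀ σ' ∈ H, (∀ a ∉ A, σ a = σ' a) → ∀ a ∈ A, σ a = σ' a) := by
  classical
  let K := H.comap (ofSubtype : Perm A →* Perm (Fin n))
  have hnorm : alternatingGroup A ≤ Subgroup.normalizer K := by
    refine Subgroup.le_normalizer_iff.2 fun h hh g hg => ?_
    obtain ⟨s, hsH, hs⟩ := halt (ofSubtype h) (fun a ha => ofSubtype_apply_of_not_mem h ha)
      (by rwa [sign_ofSubtype])
    change ofSubtype (h * g * h⁻¹) ∈ H
    rw [← conj_ofSubtype_of_eqOn g h hs]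
    exact H.mul_mem (H.mul_mem hsH hg) (H.inv_mem hsH)
  rcases eq_bot_or_alternatingGroup_le_of_le_normalizer (by rwa [Nat.card_coe_set_eq]) hnorm
    with hK | hK
  · right
    intro σ hσ σ' hσ' hagree
    obtain ⟨ρ, hρ⟩ := exists_ofSubtype_eq (p := (· ∈ A)) (τ := σ'⁻¹ * σ)
      fun a ha => by simp [hagree a ha]
    have hρ1 : ρ = 1 := by
      rw [← Subgroup.mem_bot, ← hK]
      change ofSubtype ρ ∈ H
      rw [hρ]
      exact H.mul_mem (H.inv_mem hσ') hσ
    rw [hρ1, map_one, eq_comm, inv_mul_eq_one] at hρ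
    simp [hρ]
  · left
    intro τ hτ hsign
    obtain ⟨τ', rfl⟩ := exists_ofSubtype_eq hτ
    exact hK (by rwa [sign_ofSubtype] at hsign)

/-- Let `A` be an orbit of `H ≤ Sym_n` with `|A| ≥ 5`, and suppose the restriction
`H^A` contains `Alt(A)` (every even permutation supported in `A` arises as the
restriction of some element of `H`). Then either the pointwise stabilizer of the
complement of `A` restricts onto a group containing `Alt(A)`, or the action of any
element of `H` on the complement of `A` determines its action on `A`. -/
theorem alt_orbit_dichotomy {n : ℕ} (H : Subgroup (Equiv.Perm (Fin n)))
    (A : Set (Fin n)) (hA : ∃ a : Fin n, A = {b : Fin n | ∃ σ ∈ H, σ a = b})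
    (hcard : 5 ≤ A.ncard)
    (halt : ∀ τ : Equiv.Perm (Fin n), (∀ a ∉ A, τ a = a) → Equiv.Perm.sign τ = 1 →
      ∃ σ ∈ H, ∀ a ∈ A, σ a = τ a) :
    (∀ τ : Equiv.Perm (Fin n), (∀ a ∉ A, τ a = a) → Equiv.Perm.sign τ = 1 → τ ∈ H) ∨
    (∀ σ ∈ H, ∀ σ' ∈ H, (∀ a ∉ A, σ a = σ' a) → ∀ a ∈ A, σ a = σ' a) :=
  alt_orbit_dichotomy_general H A hcard halt
end

section
/- Let 𝒫 = {P_1,…,P_m} be a partition of {1,…,n} into m parts, each of even cardinality at least 2. Let Γ = {v ∈ (F_2)^n : Σ_{j∈P_i} v(j) = 0 for every i}, and let G ≤ Sym_n be the setwise stabilizer of 𝒫 (permutations mapping each part to some part). Then for every basis ℬ of (F_2)^n that contains a basis of Γ as a subset, the setwise stabilizer of ℬ in G under the coordinate-permutation action on vectors has index at least (∏_{i=1}^m |P_i|) / m! in G. -/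
/-!
Let `K ≤ G` be the Young subgroup of permutations fixing every part, so `|K| = ∏ |P_i|!`.
Since `K ≤ G`, the index of `Stab_K(ℬ)` in `Stab_G(ℬ)` is at most `[G : K]`, and it suffices to
show `(∏ |P_i|) · |Stab_K(ℬ)| ≤ m! · |K|`. Elements of `K` preserve `Γ`, so `Stab_K(ℬ)` permutes
`ℬ \ Γ`, which has at most `codim Γ ≤ m` elements. Because `ℬ` spans, some `b_i ∈ ℬ` has odd
weight on `P_i`, hence lies in `ℬ \ Γ`; as `|P_i|` is even, `b_i` splits `P_i` into two nonempty
blocks. The kernel of the action on `ℬ \ Γ` preserves these blocks, so it has at most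
`∏ (|P_i| - 1)!` elements.
-/

open Finset MulAction Pointwise
open scoped Nat

-- `(g • v) j = v (g⁻¹ j)`, the coordinate action of the statement.
attribute [local instance] arrowAction

theorem Nat.factorial_mul_factorial_mul_add_le {s t : ℕ} (hs : 1 ≤ s) (ht : 1 ≤ t) :
    s ! * t ! * (s + t) ≤ (s + t)! := by
  have hle : ∀ t, s ! * (t + 1)! ≤ (s + t)! := by
    intro t
    induction t with
    | zero => simp
    | succ t ih =>
      calc s ! * (t + 2)! = (t + 2) * (s ! * (t + 1)!) := by rw [Nat.factorial_succ (t + 1)]; ring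
        _ ≤ (s + t + 1) * (s + t)! := Nat.mul_le_mul (by omega) ih
        _ = (s + (t + 1))! := by rw [← add_assoc, Nat.factorial_succ]
  obtain ⟨t, rfl⟩ : ∃ t', t = t' + 1 := ⟨t - 1, by omega⟩
  rw [← add_assoc, Nat.factorial_succ (s + t), mul_comm _ (s + t + 1)]
  exact Nat.mul_le_mul_left _ (hle t)

namespace Subgroup

variable {G : Type*} [Group G]

theorem card_inf_mul_relIndex (K L : Subgroup G) :
    Nat.card ↥(K ⊓ L) * K.relIndex L = Nat.card L := by
  simpa using relIndex_inf_mul_relIndex ⊥ K L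

theorem mul_card_inf_le_of_le [Finite G] {K L : Subgroup G} (hKL : K ≤ L) (H : Subgroup G)
    {c d : ℕ} (h : c * Nat.card ↥(K ⊓ H) ≤ d * Nat.card K) :
    c * Nat.card ↥(L ⊓ H) ≤ d * Nat.card L := by
  have hrel : K.relIndex (L ⊓ H) ≤ K.relIndex L :=
    relIndex_le_of_le_right inf_le_left index_ne_zero_of_finite
  rw [← card_inf_mul_relIndex K (L ⊓ H), ← inf_assoc, inf_eq_left.mpr hKL,
    ← card_inf_mul_relIndex K L, inf_eq_left.mpr hKL, ← mul_assoc, ← mul_assoc]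
  exact Nat.mul_le_mul h hrel

end Subgroup

namespace MulAction

variable {G α : Type*} [Group G] [MulAction G α]

theorem relIndex_fixingSubgroup_le_factorial {s : Set α} [Finite s] {H : Subgroup G}
    (hH : H ≤ stabilizer G s) : (fixingSubgroup G s).relIndex H ≤ (Nat.card s)! := by
  let ρ : H →* Equiv.Perm s := (toPermHom (stabilizer G s) s).comp (Subgroup.inclusion hH)
  have hker : ρ.ker = (fixingSubgroup G s).subgroupOf H := by
    ext g
    simp [ρ, Subgroup.mem_subgroupOf, mem_fixingSubgroup_iff, Equiv.ext_iff, Subtype.ext_iff]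
  calc (fixingSubgroup G s).relIndex H = Nat.card ρ.range := by
        rw [Subgroup.relIndex, ← hker, Subgroup.index_ker]
    _ ≤ Nat.card (Equiv.Perm s) := Subgroup.card_le_card_group _
    _ = (Nat.card s)! := Nat.card_perm

end MulAction

theorem LinearIndependent.ncard_sdiff_add_finrank_le {K V : Type*} [DivisionRing K]
    [AddCommGroup V] [Module K V] [FiniteDimensional K V] {B C : Set V} {W : Submodule K V}
    (hB : LinearIndependent K ((↑) : B → V)) (hCB : C ⊆ B) (hC : Submodule.span K C = W) :
    (B \ W).ncard + Module.finrank K W ≤ Module.finrank K V := by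
  have hBfin : B.Finite := hB.setFinite
  have hCfin : C.Finite := hBfin.subset hCB
  have hdiff : (B \ W).ncard ≤ (B \ C).ncard :=
    Set.ncard_le_ncard (Set.sdiff_subset_sdiff_right (hC ▸ Submodule.subset_span)) hBfin.sdiff
  have hW : Module.finrank K W ≤ C.ncard := by
    have := hCfin.fintype
    rw [← hC, Set.ncard_eq_toFinset_card']
    exact finrank_span_le_card C
  have hBV : B.ncard ≤ Module.finrank K V := by
    have := hBfin.fintype
    rw [Set.ncard_eq_toFinset_card', Set.toFinset_card]
    exact hB.fintype_card_le_finrank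
  have := Set.ncard_sdiff_add_ncard_of_subset hCB hBfin
  omega

@[simp]
theorem arrowAction_perm_smul_apply {α β : Type*} (g : Equiv.Perm α) (f : α → β) (a : α) :
    (g • f) a = f (g⁻¹ a) :=
  rfl

theorem card_stabilizer_arrowAction {α ι : Type*} [Fintype α] [DecidableEq α] [Fintype ι]
    [DecidableEq ι] (f : α → ι) :
    Nat.card (stabilizer (Equiv.Perm α) f) = ∏ i, (#{a | f a = i})! := by
  have hmem : ∀ g : Equiv.Perm α, g ∈ stabilizer (Equiv.Perm α) f ↔ f ∘ g = f := fun g => by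
    rw [mem_stabilizer_iff]
    constructor <;> intro h <;> ext a
    · simpa using (congrFun h (g a)).symm
    · simpa using (congrFun h (g⁻¹ a)).symm
  rw [Nat.card_congr (Equiv.subtypeEquivRight hmem), Nat.card_eq_fintype_card,
    DomMulAct.stabilizer_card]
  simp only [Fintype.card_subtype]

theorem image_fiber_eq_of_mem_stabilizer {α ι : Type*} [Fintype α] [DecidableEq α]
    [DecidableEq ι] {part : α → ι} {g : Equiv.Perm α} (hg : g ∈ stabilizer (Equiv.Perm α) part)
    (i : ι) :
    ({a | part a = i} : Finset α).image g = ({a | part a = i} : Finset α) := by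
  have hpart : ∀ a, part (g⁻¹ a) = part a := congrFun (mem_stabilizer_iff.mp hg)
  ext x
  simp only [mem_image, mem_filter, mem_univ, true_and]
  constructor
  · rintro ⟨a, rfl, rfl⟩
    simpa using (hpart (g a)).symm
  · intro hx
    exact ⟨g⁻¹ x, (hpart x).trans hx, by simp⟩

theorem perm_smul_fiberwise_eq {α ι β : Type*} {f : α → ι} {b : ι → α → β} {g : Equiv.Perm α}
    (hf : g • f = f) (hb : ∀ i, g • b i = b i) :
    g • (fun a => (f a, b (f a) a)) = fun a => (f a, b (f a) a) := by
  ext a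
  · exact congrFun hf a
  · have hfa : f (g⁻¹ a) = f a := congrFun hf a
    have hba : b (f a) (g⁻¹ a) = b (f a) a := congrFun (hb (f a)) a
    change b (f (g⁻¹ a)) (g⁻¹ a) = b (f a) a
    rw [hfa, hba]

section FiberSum

variable {α ι R : Type*} [Fintype α] [DecidableEq ι] [CommSemiring R]

def fiberSum (part : α → ι) : (α → R) →ₗ[R] ι → R where
  toFun v i := ∑ a with part a = i, v a
  map_add' v w := by ext i; simp [sum_add_distrib]
  map_smul' c v := by ext i; simp [mul_sum]

theorem fiberSum_apply (part : α → ι) (v : α → R) (i : ι) :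
    fiberSum part v i = ∑ a with part a = i, v a := rfl

theorem fiberSum_smul_of_mem_stabilizer {part : α → ι} {g : Equiv.Perm α}
    (hg : g ∈ stabilizer (Equiv.Perm α) part) (v : α → R) :
    fiberSum part (g • v) = fiberSum part v := by
  ext i
  have hpart : ∀ a, part (g⁻¹ a) = part a := congrFun (mem_stabilizer_iff.mp hg)
  simp only [fiberSum_apply, sum_filter]
  exact Fintype.sum_equiv g⁻¹ _ _ fun a => by rw [hpart]; rfl

theorem stabilizer_le_stabilizer_ker_fiberSum (part : α → ι) :
    stabilizer (Equiv.Perm α) part ≤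
      stabilizer (Equiv.Perm α) (LinearMap.ker (fiberSum (R := R) part) : Set (α → R)) := by
  intro g hg
  rw [mem_stabilizer_iff]
  ext v
  rw [Set.mem_smul_set_iff_inv_smul_mem, SetLike.mem_coe, SetLike.mem_coe, LinearMap.mem_ker,
    LinearMap.mem_ker, fiberSum_smul_of_mem_stabilizer (inv_mem hg)]

theorem card_le_finrank_ker_fiberSum_add {K : Type*} [Field K] [Fintype ι] (part : α → ι) :
    Fintype.card α ≤
      Module.finrank K (LinearMap.ker (fiberSum (R := K) part)) + Fintype.card ι := by
  have hrank := LinearMap.finrank_range_add_finrank_ker (fiberSum (R := K) part)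
  have hrange := Submodule.finrank_le (LinearMap.range (fiberSum (R := K) part))
  rw [Module.finrank_fintype_fun_eq_card] at hrank hrange
  omega

theorem exists_mem_fiberSum_eq_one {part : α → ι} {B : Set (α → ZMod 2)}
    (hB : Submodule.span (ZMod 2) B = ⊤) {i : ι} (hi : ∃ a, part a = i) :
    ∃ v ∈ B, fiberSum part v i = 1 := by
  classical
  obtain ⟨a, rfl⟩ := hi
  by_contra! h
  have hzero : (LinearMap.proj (part a)).comp (fiberSum part) = 0 :=
    LinearMap.ext_on hB fun v hv => by
      have hZ2 : ∀ x : ZMod 2, x ≠ 1 → x = 0 := by decide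
      exact hZ2 _ (h v hv)
  have := LinearMap.congr_fun hzero (Pi.single a 1)
  simp [fiberSum_apply] at this

end FiberSum

theorem Finset.exists_eq_of_even_card_of_sum_eq_one {α : Type*} {s : Finset α} (hs : Even #s)
    {v : α → ZMod 2} (hv : ∑ a ∈ s, v a = 1) (x : ZMod 2) : ∃ a ∈ s, v a = x := by
  by_contra! h
  have hflip : ∀ a ∈ s, v a = x + 1 := by
    have flip : ∀ x y : ZMod 2, y ≠ x → y = x + 1 := by decide
    exact fun a ha => flip x (v a) (h a ha)
  rw [sum_congr rfl hflip, sum_const, nsmul_eq_mul, hs.natCast_zmod_two, zero_mul] at hv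
  exact zero_ne_one hv

theorem Finset.card_mul_factorial_mul_factorial_le {α : Type*} (s : Finset α) (v : α → ZMod 2)
    (h0 : 0 < #{a ∈ s | v a = 0}) (h1 : 0 < #{a ∈ s | v a = 1}) :
    #s * ((#{a ∈ s | v a = 0})! * (#{a ∈ s | v a = 1})!) ≤ (#s)! := by
  have hsplit : #{a ∈ s | v a = 0} + #{a ∈ s | v a = 1} = #s := by
    have hne : ∀ y : ZMod 2, y = 1 ↔ ¬y = 0 := by decide
    simp only [hne]
    exact card_filter_add_card_filter_not _
  rw [← hsplit, mul_comm]
  exact Nat.factorial_mul_factorial_mul_add_le h0 h1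

theorem prod_card_mul_card_stabilizer_le {α ι : Type*} [Fintype α] [DecidableEq α] [Fintype ι]
    [DecidableEq ι] (part : α → ι) (b : ι → α → ZMod 2)
    (hb : ∀ i x, 0 < #{a ∈ {a | part a = i} | b i a = x}) :
    (∏ i, #{a | part a = i}) *
        Nat.card (stabilizer (Equiv.Perm α) fun a => (part a, b (part a) a)) ≤
      Nat.card (stabilizer (Equiv.Perm α) part) := by
  have hfiber : ∀ i x,
      #{a | (part a, b (part a) a) = (i, x)} = #{a ∈ {a | part a = i} | b i a = x} := by
    intro i x
    rw [filter_filter]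
    congr 1
    ext a
    simp only [mem_filter, mem_univ, true_and, Prod.mk.injEq]
    constructor <;> rintro ⟨rfl, h⟩ <;> exact ⟨rfl, h⟩
  rw [card_stabilizer_arrowAction, card_stabilizer_arrowAction, Fintype.prod_prod_type,
    ← prod_mul_distrib]
  refine prod_le_prod' fun i _ => ?_
  simp only [hfiber]
  -- `ZMod 2` is `Fin 2` by definition
  rw [show ∀ F : ZMod 2 → ℕ, ∏ x, F x = F 0 * F 1 from Fin.prod_univ_two]
  exact card_mul_factorial_mul_factorial_le _ (b i) (hb i 0) (hb i 1)

theorem prod_card_mul_card_stabilizer_inf_le {α ι : Type*} [Fintype α] [DecidableEq α]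
    [Fintype ι] [DecidableEq ι] (part : α → ι) (heven : ∀ i, Even #{a | part a = i})
    (hne : ∀ i, ∃ a, part a = i) {B C : Set (α → ZMod 2)}
    (hB : LinearIndependent (ZMod 2) ((↑) : B → α → ZMod 2))
    (hBspan : Submodule.span (ZMod 2) B = ⊤) (hCB : C ⊆ B)
    (hC : Submodule.span (ZMod 2) C = LinearMap.ker (fiberSum part)) :
    (∏ i, #{a | part a = i}) *
        Nat.card ↥(stabilizer (Equiv.Perm α) part ⊓ stabilizer (Equiv.Perm α) B) ≤
      (Fintype.card ι)! * Nat.card (stabilizer (Equiv.Perm α) part) := by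
  set K := stabilizer (Equiv.Perm α) part
  set H := K ⊓ stabilizer (Equiv.Perm α) B
  set D := B \ (LinearMap.ker (fiberSum (R := ZMod 2) part) : Set (α → ZMod 2))
  choose b hbB hb using fun i => exists_mem_fiberSum_eq_one hBspan (hne i)
  have hbD : ∀ i, b i ∈ D := fun i => ⟨hbB i, fun hker => by
    have hzero := congrFun (LinearMap.mem_ker.mp hker) i
    rw [hb i] at hzero
    exact one_ne_zero hzero⟩
  have hD : Nat.card D ≤ Fintype.card ι := by
    have hdim : D.ncard + Module.finrank (ZMod 2) (LinearMap.ker (fiberSum (R := ZMod 2) part))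
        ≤ Fintype.card α := by
      simpa only [Module.finrank_fintype_fun_eq_card] using hB.ncard_sdiff_add_finrank_le hCB hC
    have hcodim := card_le_finrank_ker_fiberSum_add (K := ZMod 2) part
    rw [Nat.card_coe_set_eq]
    omega
  have hHD : H ≤ stabilizer (Equiv.Perm α) D := fun g hg => by
    rw [mem_stabilizer_iff, Set.smul_set_sdiff, mem_stabilizer_iff.mp hg.2,
      mem_stabilizer_iff.mp (stabilizer_le_stabilizer_ker_fiberSum part hg.1)]
  have hfix : fixingSubgroup (Equiv.Perm α) D ⊓ H ≤
      stabilizer (Equiv.Perm α) fun a => (part a, b (part a) a) := fun g hg =>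
    perm_smul_fiberwise_eq hg.2.1 fun i => (mem_fixingSubgroup_iff _).mp hg.1 (b i) (hbD i)
  have hsplit : ∀ i x, 0 < #{a ∈ {a | part a = i} | b i a = x} := fun i x => by
    obtain ⟨a, ha, hax⟩ := exists_eq_of_even_card_of_sum_eq_one (heven i) (hb i) x
    exact card_pos.mpr ⟨a, mem_filter.mpr ⟨ha, hax⟩⟩
  calc (∏ i, #{a | part a = i}) * Nat.card H
      = (∏ i, #{a | part a = i}) * (Nat.card ↥(fixingSubgroup (Equiv.Perm α) D ⊓ H) *
          (fixingSubgroup (Equiv.Perm α) D).relIndex H) := by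
        rw [Subgroup.card_inf_mul_relIndex]
    _ ≤ (∏ i, #{a | part a = i}) *
          (Nat.card (stabilizer (Equiv.Perm α) fun a => (part a, b (part a) a)) *
            (Fintype.card ι)!) := by
        gcongr
        · exact Subgroup.card_le_of_le hfix
        · exact (relIndex_fixingSubgroup_le_factorial hHD).trans (Nat.factorial_le hD)
    _ ≤ (Fintype.card ι)! * Nat.card K := by
        rw [← mul_assoc, mul_comm]
        exact Nat.mul_le_mul_left _ (prod_card_mul_card_stabilizer_le part b hsplit)

theorem index_basis_stabilizer_large_general (n m : ℕ) (P : Fin m → Finset (Fin n))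
    (hpart : ∀ a : Fin n, ∃! i : Fin m, a ∈ P i)
    (heven : ∀ i, Even (P i).card) (h2 : ∀ i, 2 ≤ (P i).card)
    (Γ : Submodule (ZMod 2) (Fin n → ZMod 2))
    (hΓ : ∀ v : Fin n → ZMod 2, v ∈ Γ ↔ ∀ i, ∑ j ∈ P i, v j = 0)
    (G : Subgroup (Equiv.Perm (Fin n)))
    (hG : ∀ π : Equiv.Perm (Fin n), π ∈ G ↔ ∀ i, ∃ i', (P i).image π = P i')
    (ℬ : Set (Fin n → ZMod 2))
    (hind : LinearIndependent (ZMod 2) ((↑) : ℬ → (Fin n → ZMod 2)))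
    (hspan : Submodule.span (ZMod 2) ℬ = ⊤)
    (ℬΓ : Set (Fin n → ZMod 2)) (hsub : ℬΓ ⊆ ℬ)
    (hspanΓ : Submodule.span (ZMod 2) ℬΓ = Γ) :
    (∏ i, (P i).card) *
        Nat.card {π : Equiv.Perm (Fin n) //
          π ∈ G ∧ (fun v : Fin n → ZMod 2 => fun j => v (π⁻¹ j)) '' ℬ = ℬ} ≤
      Nat.factorial m * Nat.card G := by
  choose part hpart_mem hpart_unique using hpart
  obtain rfl : P = fun i => ({a | part a = i} : Finset (Fin n)) := by
    ext i a
    simpa using ⟨fun h => (hpart_unique a i h).symm, fun h => h ▸ hpart_mem a⟩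
  beta_reduce at heven h2 hG ⊢
  obtain rfl : Γ = LinearMap.ker (fiberSum part) := by
    ext v
    rw [hΓ, LinearMap.mem_ker, funext_iff]
    rfl
  have hne : ∀ i, ∃ a, part a = i := fun i => by
    obtain ⟨a, ha⟩ := card_pos.mp (lt_of_lt_of_le two_pos (h2 i))
    exact ⟨a, (mem_filter.mp ha).2⟩
  have hKG : stabilizer (Equiv.Perm (Fin n)) part ≤ G := fun g hg =>
    (hG g).mpr fun i => ⟨i, image_fiber_eq_of_mem_stabilizer hg i⟩
  change _ * Nat.card ↥(G ⊓ stabilizer (Equiv.Perm (Fin n)) ℬ) ≤ _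
  refine Subgroup.mul_card_inf_le_of_le hKG _ ?_
  simpa using prod_card_mul_card_stabilizer_inf_le part heven hne hind hspan hsub hspanΓ

/-- Let `P₁,…,P_m` partition `{1,…,n}` into parts of even size `≥ 2`, let `Γ` be the
subspace of `(F₂)^n` of vectors with even weight on each part, and let `G` be the
setwise stabilizer of the partition in `Sym_n`. Then for every basis `ℬ` of `(F₂)^n`
containing a basis of `Γ`, the setwise stabilizer of `ℬ` in `G` (under the
coordinate-permutation action) has index at least `(∏ᵢ |Pᵢ|)/m!` in `G`; i.e.
`(∏ᵢ |Pᵢ|) · |Stab_G(ℬ)| ≤ m! · |G|`. -/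
theorem index_basis_stabilizer_large (n m : ℕ) (P : Fin m → Finset (Fin n))
    (hpart : ∀ a : Fin n, ∃! i : Fin m, a ∈ P i)
    (heven : ∀ i, Even (P i).card) (h2 : ∀ i, 2 ≤ (P i).card)
    (Γ : Submodule (ZMod 2) (Fin n → ZMod 2))
    (hΓ : ∀ v : Fin n → ZMod 2, v ∈ Γ ↔ ∀ i, ∑ j ∈ P i, v j = 0)
    (G : Subgroup (Equiv.Perm (Fin n)))
    (hG : ∀ π : Equiv.Perm (Fin n), π ∈ G ↔ ∀ i, ∃ i', (P i).image π = P i')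
    (ℬ : Set (Fin n → ZMod 2))
    (hind : LinearIndependent (ZMod 2) ((↑) : ℬ → (Fin n → ZMod 2)))
    (hspan : Submodule.span (ZMod 2) ℬ = ⊤)
    (ℬΓ : Set (Fin n → ZMod 2)) (hsub : ℬΓ ⊆ ℬ)
    (hindΓ : LinearIndependent (ZMod 2) ((↑) : ℬΓ → (Fin n → ZMod 2)))
    (hspanΓ : Submodule.span (ZMod 2) ℬΓ = Γ) :
    (∏ i, (P i).card) *
        Nat.card {π : Equiv.Perm (Fin n) //
          π ∈ G ∧ (fun v : Fin n → ZMod 2 => fun j => v (π⁻¹ j)) '' ℬ = ℬ} ≤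
      Nat.factorial m * Nat.card G :=
  index_basis_stabilizer_large_general n m P hpart heven h2 Γ hΓ G hG ℬ hind hspan ℬΓ hsub hspanΓ
end
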